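/- arXiv:math/0211140 — 6 statements merged into one kernel-verified Lean document; each statement's English description precedes it below -/
import Mathlib

section
/- Let (a_n)_{n∈ℕ} be a sequence of complex numbers. Suppose that for every δ > 0 there is a set of positive integers S_δ of lower density at least 1 − δ such that the oscillation of the subsequence (a_n)_{n∈S_δ} is at most δ. Then there exist a set of positive integers T of density 1 and a complex number A such that a_n → A as n → ∞ along T. -/
open Filter MeasureTheory
open scoped ENNReal Topology

/-- The lower density of a set of positive integers:
`liminf_{N→∞} #(S ∩ {1,…,N}) / N`. -/
noncomputable def lowerDensity (S : Set ℕ) : ℝ :=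
  Filter.liminf (fun N : ℕ => (Nat.card ↥(S ∩ Set.Icc 1 N) : ℝ) / N) Filter.atTop

/-- `S` has density `d`: `lim_{N→∞} #(S ∩ {1,…,N}) / N = d`. -/
def HasDensity (S : Set ℕ) (d : ℝ) : Prop :=
  Filter.Tendsto (fun N : ℕ => (Nat.card ↥(S ∩ Set.Icc 1 N) : ℝ) / N) Filter.atTop (𝓝 d)

/-- The oscillation of the subsequence `(a n)_{n ∈ S}`:
`lim_{N→∞} sup { dist (a m) (a n) : m, n ∈ S, m > N, n > N }` (the sup is antitone in `N`,
so the limit is the infimum over `N`), valued in `[0,∞]`. -/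
noncomputable def seqOscillation (S : Set ℕ) (a : ℕ → ℂ) : ℝ≥0∞ :=
  ⨅ N : ℕ, ⨆ (m : ℕ) (_ : m ∈ S) (_ : N < m) (n : ℕ) (_ : n ∈ S) (_ : N < n),
    edist (a m) (a n)

open scoped Classical in
/-- Auxiliary counting function: `#(S ∩ [1, N])` as a `Finset` cardinality. -/
noncomputable def cnt (S : Set ℕ) (N : ℕ) : ℕ := ((Finset.Icc 1 N).filter (· ∈ S)).card

open scoped Classical in
lemma natCard_eq_cnt (S : Set ℕ) (N : ℕ) :
    Nat.card ↥(S ∩ Set.Icc 1 N) = cnt S N := by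
  rw [Nat.card_coe_set_eq]
  have h : S ∩ Set.Icc 1 N = ↑((Finset.Icc 1 N).filter (· ∈ S)) := by
    ext x
    simp only [Finset.coe_filter, Finset.mem_Icc, Set.mem_inter_iff, Set.mem_Icc,
      Set.mem_setOf_eq]
    tauto
  rw [h, Set.ncard_coe_finset, cnt]

open scoped Classical in
lemma cnt_le (S : Set ℕ) (N : ℕ) : cnt S N ≤ N := by
  calc cnt S N ≤ (Finset.Icc 1 N).card := Finset.card_filter_le _ _
    _ = N := by simp

open scoped Classical in
lemma cnt_le_add (S : Set ℕ) (a N : ℕ) :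
    cnt S N ≤ a + ((Finset.Ioc a N).filter (· ∈ S)).card := by
  have hsub : (Finset.Icc 1 N).filter (· ∈ S) ⊆
      Finset.Icc 1 a ∪ (Finset.Ioc a N).filter (· ∈ S) := by
    intro x hx
    simp only [Finset.mem_filter, Finset.mem_Icc] at hx
    rcases le_or_gt x a with hxa | hxa
    · exact Finset.mem_union_left _ (Finset.mem_Icc.mpr ⟨hx.1.1, hxa⟩)
    · exact Finset.mem_union_right _ (Finset.mem_filter.mpr ⟨Finset.mem_Ioc.mpr ⟨hxa, hx.1.2⟩, hx.2⟩)
  calc cnt S N ≤ (Finset.Icc 1 a ∪ (Finset.Ioc a N).filter (· ∈ S)).card :=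
        Finset.card_le_card hsub
    _ ≤ (Finset.Icc 1 a).card + ((Finset.Ioc a N).filter (· ∈ S)).card := Finset.card_union_le _ _
    _ = a + _ := by simp

open scoped Classical in
lemma cnt_inter_ge (S S' : Set ℕ) (N : ℕ) :
    cnt S N + cnt S' N ≤ N + cnt (S ∩ S') N := by
  have h1 : ((Finset.Icc 1 N).filter (· ∈ S) ∩ (Finset.Icc 1 N).filter (· ∈ S')).card
      ≤ cnt (S ∩ S') N := by
    rw [cnt]
    apply Finset.card_le_card
    intro x hx
    simp only [Finset.mem_inter, Finset.mem_filter] at hx ⊢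
    exact ⟨hx.1.1, hx.1.2, hx.2.2⟩
  have h2 := Finset.card_inter_add_card_union ((Finset.Icc 1 N).filter (· ∈ S))
      ((Finset.Icc 1 N).filter (· ∈ S'))
  have h3 : ((Finset.Icc 1 N).filter (· ∈ S) ∪ (Finset.Icc 1 N).filter (· ∈ S')).card ≤ N := by
    calc ((Finset.Icc 1 N).filter (· ∈ S) ∪ (Finset.Icc 1 N).filter (· ∈ S')).card
        ≤ (Finset.Icc 1 N).card := Finset.card_le_card (by
          intro x hx; rcases Finset.mem_union.mp hx with hx | hx <;>
            exact (Finset.mem_filter.mp hx).1)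
      _ = N := by simp
  have e1 : cnt S N = ((Finset.Icc 1 N).filter (· ∈ S)).card := rfl
  have e2 : cnt S' N = ((Finset.Icc 1 N).filter (· ∈ S')).card := rfl
  omega

/-- Auxiliary recursively defined sequence of thresholds. -/
noncomputable def NfAux (c d : ℕ → ℕ) : ℕ → ℕ
  | 0 => 0
  | k+1 => c k + c (k+1) + d (k+1) + 2^(k+1) * NfAux c d k + NfAux c d k + 1

lemma NfAux_facts (c d : ℕ → ℕ) (k : ℕ) :
    c k ≤ NfAux c d (k+1) ∧ c (k+1) ≤ NfAux c d (k+1) ∧ d (k+1) ≤ NfAux c d (k+1) ∧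
      2^(k+1) * NfAux c d k ≤ NfAux c d (k+1) ∧ NfAux c d k < NfAux c d (k+1) := by
  have e : NfAux c d (k+1)
      = c k + c (k+1) + d (k+1) + 2^(k+1) * NfAux c d k + NfAux c d k + 1 := rfl
  rw [e]
  generalize 2^(k+1) * NfAux c d k = w
  omega

/-- If for every `δ > 0` there is a set `S` of lower density at least `1 - δ` along which the
oscillation of `a` is at most `δ`, then there is a set `T` of density one along which `a`
converges. -/
theorem stmt0 (a : ℕ → ℂ)
    (h : ∀ δ : ℝ, 0 < δ →
      ∃ S : Set ℕ, 1 - δ ≤ lowerDensity S ∧ seqOscillation S a ≤ ENNReal.ofReal δ) :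
    ∃ (T : Set ℕ) (A : ℂ), HasDensity T 1 ∧
      Filter.Tendsto a (Filter.atTop ⊓ Filter.principal T) (𝓝 A) := by
  classical
  have hεpos : ∀ k : ℕ, (0:ℝ) < (1/2)^k / 8 := fun k => by positivity
  choose S hSdens hSosc using fun k : ℕ => h ((1/2)^k / 8) (hεpos k)
  -- oscillation thresholds
  have hoscEx : ∀ k : ℕ, ∃ C : ℕ, ∀ m ∈ S k, ∀ n ∈ S k, C < m → C < n →
      dist (a m) (a n) ≤ 2 * ((1/2)^k / 8) := by
    intro k
    have h1 : seqOscillation (S k) a < ENNReal.ofReal (2 * ((1/2)^k/8)) := by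
      refine lt_of_le_of_lt (hSosc k) ?_
      rw [ENNReal.ofReal_lt_ofReal_iff (by positivity)]
      linarith [hεpos k]
    rw [seqOscillation, iInf_lt_iff] at h1
    obtain ⟨C, hC⟩ := h1
    refine ⟨C, fun m hm n hn hCm hCn => ?_⟩
    have h2 : edist (a m) (a n) < ENNReal.ofReal (2 * ((1/2)^k/8)) := by
      refine lt_of_le_of_lt ?_ hC
      exact le_iSup_of_le m (le_iSup_of_le hm (le_iSup_of_le hCm (le_iSup_of_le n
        (le_iSup_of_le hn (le_iSup_of_le hCn (le_refl _))))))
    exact le_of_lt (edist_lt_ofReal.mp h2)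
  choose c hc using hoscEx
  -- density thresholds
  have hdensEx : ∀ k : ℕ, ∃ D : ℕ, ∀ N, D ≤ N →
      (1 - 2 * ((1/2)^k / 8)) * N ≤ (cnt (S k) N : ℝ) := by
    intro k
    have hle : 1 - (1/2)^k/8
        ≤ Filter.liminf (fun N : ℕ => (cnt (S k) N : ℝ) / N) Filter.atTop := by
      have h0 := hSdens k
      rw [lowerDensity] at h0
      simpa only [natCard_eq_cnt] using h0
    have hb : Filter.IsBoundedUnder (· ≥ ·) Filter.atTop
        (fun N : ℕ => (cnt (S k) N : ℝ) / N) :=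
      Filter.isBoundedUnder_of ⟨0, fun N => by positivity⟩
    have h1 : (1 - 2 * ((1/2)^k / 8) : ℝ)
        < Filter.liminf (fun N : ℕ => (cnt (S k) N : ℝ) / N) Filter.atTop :=
      lt_of_lt_of_le (by linarith [hεpos k]) hle
    have h2 := Filter.eventually_lt_of_lt_liminf h1 hb
    rw [Filter.eventually_atTop] at h2
    obtain ⟨D, hD⟩ := h2
    refine ⟨max D 1, fun N hN => ?_⟩
    have hN1 : 1 ≤ N := le_trans (le_max_right _ _) hN
    have hND : D ≤ N := le_trans (le_max_left _ _) hN
    have h3 := hD N hND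
    have hNpos : (0:ℝ) < N := by exact_mod_cast hN1
    calc (1 - 2 * ((1/2)^k / 8)) * N ≤ ((cnt (S k) N : ℝ) / N) * N := by nlinarith
      _ = cnt (S k) N := by field_simp
  choose d hd using hdensEx
  set Nf : ℕ → ℕ := NfAux c d with hNfdef
  have hNfc : ∀ k, c k ≤ Nf (k+1) := fun k => (NfAux_facts c d k).1
  have hNfc' : ∀ k, c (k+1) ≤ Nf (k+1) := fun k => (NfAux_facts c d k).2.1
  have hNfd : ∀ k, d (k+1) ≤ Nf (k+1) := fun k => (NfAux_facts c d k).2.2.1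
  have hNfgeom : ∀ k, 2^(k+1) * Nf k ≤ Nf (k+1) := fun k => (NfAux_facts c d k).2.2.2.1
  have hNflt : ∀ k, Nf k < Nf (k+1) := fun k => (NfAux_facts c d k).2.2.2.2
  have hNfmono : StrictMono Nf := strictMono_nat_of_lt_succ hNflt
  -- choosing connecting points
  have hpEx : ∀ k B : ℕ, ∃ x, x ∈ S k ∧ x ∈ S (k+1) ∧ B < x := by
    intro k B
    set N := max (max (d k) (d (k+1))) (2*B + 2) with hNdef
    have hdk : d k ≤ N := le_trans (le_max_left _ _) (le_max_left _ _)
    have hdk' : d (k+1) ≤ N := le_trans (le_max_right _ _) (le_max_left _ _)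
    have h1 := hd k N hdk
    have h2 := hd (k+1) N hdk'
    have h3 : (cnt (S k) N : ℝ) + cnt (S (k+1)) N ≤ N + cnt (S k ∩ S (k+1)) N := by
      exact_mod_cast cnt_inter_ge (S k) (S (k+1)) N
    have hk1 : ((1:ℝ)/2)^k ≤ 1 := pow_le_one₀ (by norm_num) (by norm_num)
    have hk2 : ((1:ℝ)/2)^(k+1) ≤ 1 := pow_le_one₀ (by norm_num) (by norm_num)
    have hNr : (0:ℝ) ≤ N := Nat.cast_nonneg N
    have hNB : (2*(B:ℝ) + 2) ≤ N := by
      have : 2*B + 2 ≤ N := le_max_right _ _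
      exact_mod_cast this
    have t1 : (3/4:ℝ) * N ≤ (1 - 2 * ((1/2)^k / 8)) * N := by nlinarith
    have t2 : (3/4:ℝ) * N ≤ (1 - 2 * ((1/2)^(k+1) / 8)) * N := by nlinarith
    have hB : (B:ℝ) < (cnt (S k ∩ S (k+1)) N : ℝ) := by linarith
    have hBnat : B < cnt (S k ∩ S (k+1)) N := by exact_mod_cast hB
    by_contra hcon
    push_neg at hcon
    have : cnt (S k ∩ S (k+1)) N ≤ B := by
      rw [cnt]
      calc _ ≤ (Finset.Icc 1 B).card := Finset.card_le_card (by
            intro x hx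
            simp only [Finset.mem_filter, Finset.mem_Icc, Set.mem_inter_iff] at hx
            exact Finset.mem_Icc.mpr ⟨hx.1.1, hcon x hx.2.1 hx.2.2⟩)
        _ = B := by simp
    omega
  choose p hp1 hp2 hp3 using fun k => hpEx k (Nf (k+1))
  -- the connecting points form a Cauchy sequence
  have hpd : ∀ i : ℕ, dist (a (p i)) (a (p (i+1))) ≤ (1/8) * (1/2)^i := by
    intro i
    have hm1 : c (i+1) < p i := lt_of_le_of_lt (hNfc' i) (hp3 i)
    have hm2 : c (i+1) < p (i+1) :=
      lt_of_le_of_lt (le_trans (hNfc' i) (le_of_lt (hNflt (i+1)))) (hp3 (i+1))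
    have := hc (i+1) (p i) (hp2 i) (p (i+1)) (hp1 (i+1)) hm1 hm2
    calc dist (a (p i)) (a (p (i+1))) ≤ 2 * ((1/2)^(i+1) / 8) := this
      _ = (1/8) * (1/2)^i := by ring
  have hcauchy : CauchySeq (fun i => a (p i)) :=
    cauchySeq_of_le_geometric (1/2) (1/8) (by norm_num) hpd
  obtain ⟨A, hA⟩ := cauchySeq_tendsto_of_complete hcauchy
  have hpA : ∀ i : ℕ, dist (a (p i)) A ≤ (1/8) * (1/2)^i / (1 - 1/2) :=
    dist_le_of_le_geometric_of_tendsto (1/2) (1/8) (by norm_num) hpd hA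
  -- the density-one set
  set T : Set ℕ := ⋃ j, S (j+1) ∩ Set.Ioc (Nf (j+1)) (Nf (j+2)) with hTdef
  -- the key convergence estimate
  have hkey : ∀ k : ℕ, ∀ n ∈ T, Nf (k+1) < n → dist (a n) A ≤ (1/2)^k := by
    intro k n hn hkn
    obtain ⟨j, hj⟩ := Set.mem_iUnion.mp hn
    obtain ⟨hnS, hn1, hn2⟩ : n ∈ S (j+1) ∧ Nf (j+1) < n ∧ n ≤ Nf (j+2) :=
      ⟨hj.1, hj.2.1, hj.2.2⟩
    have hjk : k ≤ j := by
      by_contra hcon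
      push_neg at hcon
      have : Nf (j+2) ≤ Nf (k+1) := hNfmono.monotone (by omega)
      omega
    have hd1 : dist (a n) (a (p (j+1))) ≤ 2 * ((1/2)^(j+1) / 8) := by
      refine hc (j+1) n hnS (p (j+1)) (hp1 (j+1)) ?_ ?_
      · exact lt_of_le_of_lt (hNfc' j) hn1
      · exact lt_of_le_of_lt (le_trans (hNfc' j) (le_of_lt (hNflt (j+1)))) (hp3 (j+1))
    have hd2 := hpA (j+1)
    have hmon : ((1:ℝ)/2)^j ≤ (1/2)^k :=
      pow_le_pow_of_le_one (by norm_num) (by norm_num) hjk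
    have hjnn : (0:ℝ) ≤ (1/2)^j := by positivity
    calc dist (a n) A ≤ dist (a n) (a (p (j+1))) + dist (a (p (j+1))) A := dist_triangle _ _ _
      _ ≤ 2 * ((1/2)^(j+1) / 8) + (1/8) * (1/2)^(j+1) / (1 - 1/2) := by linarith
      _ = (1/4) * (1/2)^j := by ring
      _ ≤ (1/2)^j := by linarith
      _ ≤ (1/2)^k := hmon
  -- the key density estimate, block version
  have hdkey1 : ∀ j N : ℕ, Nf (j+2) < N → N ≤ Nf (j+3) →
      (1 - (1/2)^j) * N ≤ (cnt T N : ℝ) := by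
    intro j N hN2 hN3
    set F1 := (Finset.Ioc (Nf (j+2)) N).filter (· ∈ S (j+2)) with hF1
    set F2 := (Finset.Ioc (Nf (j+1)) (Nf (j+2))).filter (· ∈ S (j+1)) with hF2
    have hdisj : Disjoint F1 F2 := by
      rw [Finset.disjoint_left]
      intro x hx1 hx2
      simp only [hF1, hF2, Finset.mem_filter, Finset.mem_Ioc] at hx1 hx2
      omega
    have hsub : F1 ∪ F2 ⊆ (Finset.Icc 1 N).filter (· ∈ T) := by
      intro x hx
      rcases Finset.mem_union.mp hx with hx | hx
      · simp only [hF1, Finset.mem_filter, Finset.mem_Ioc] at hx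
        refine Finset.mem_filter.mpr ⟨Finset.mem_Icc.mpr ⟨by omega, hx.1.2⟩, ?_⟩
        exact Set.mem_iUnion.mpr ⟨j+1, ⟨hx.2, hx.1.1, le_trans hx.1.2 hN3⟩⟩
      · simp only [hF2, Finset.mem_filter, Finset.mem_Ioc] at hx
        refine Finset.mem_filter.mpr ⟨Finset.mem_Icc.mpr ⟨by omega, by omega⟩, ?_⟩
        exact Set.mem_iUnion.mpr ⟨j, ⟨hx.2, hx.1.1, hx.1.2⟩⟩
    have hcard : F1.card + F2.card ≤ cnt T N := by
      rw [cnt, ← Finset.card_union_of_disjoint hdisj]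
      exact Finset.card_le_card hsub
    have c1 : cnt (S (j+2)) N ≤ Nf (j+2) + F1.card := cnt_le_add _ _ _
    have c2 : cnt (S (j+1)) (Nf (j+2)) ≤ Nf (j+1) + F2.card := cnt_le_add _ _ _
    have r1 : (1 - 2 * ((1/2)^(j+2) / 8)) * N ≤ (cnt (S (j+2)) N : ℝ) :=
      hd (j+2) N (le_trans (hNfd (j+1)) (le_of_lt hN2))
    have r2 : (1 - 2 * ((1/2)^(j+1) / 8)) * (Nf (j+2) : ℝ) ≤ cnt (S (j+1)) (Nf (j+2)) :=
      hd (j+1) (Nf (j+2)) (le_trans (hNfd j) (le_of_lt (hNflt (j+1))))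
    have g : (2:ℝ)^(j+2) * Nf (j+1) ≤ Nf (j+2) := by exact_mod_cast hNfgeom (j+1)
    have g' : (Nf (j+1) : ℝ) ≤ (1/2)^(j+2) * Nf (j+2) := by
      have hpow : ((1:ℝ)/2)^(j+2) * (2:ℝ)^(j+2) = 1 := by
        rw [← mul_pow]; norm_num
      have := mul_le_mul_of_nonneg_left g (by positivity : (0:ℝ) ≤ (1/2)^(j+2))
      calc (Nf (j+1) : ℝ) = ((1/2)^(j+2) * (2:ℝ)^(j+2)) * Nf (j+1) := by rw [hpow]; ring
        _ = (1/2)^(j+2) * ((2:ℝ)^(j+2) * Nf (j+1)) := by ring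
        _ ≤ (1/2)^(j+2) * Nf (j+2) := this
    have hc1 : (cnt (S (j+2)) N : ℝ) ≤ Nf (j+2) + F1.card := by exact_mod_cast c1
    have hc2 : (cnt (S (j+1)) (Nf (j+2)) : ℝ) ≤ Nf (j+1) + F2.card := by exact_mod_cast c2
    have hcard' : (F1.card : ℝ) + F2.card ≤ cnt T N := by exact_mod_cast hcard
    have hNN : (Nf (j+2) : ℝ) ≤ N := by exact_mod_cast le_of_lt hN2
    have hx0 : (0:ℝ) ≤ (1/2)^j := by positivity
    have hNge : (0:ℝ) ≤ (N:ℝ) := Nat.cast_nonneg N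
    have hxN : (0:ℝ) ≤ (1/2)^j * N := by positivity
    have e2 : ((1:ℝ)/2)^(j+2) = (1/2)^j * (1/4) := by ring
    have e1 : ((1:ℝ)/2)^(j+1) = (1/2)^j * (1/2) := by ring
    have m1 : ((1:ℝ)/2)^j * (Nf (j+2):ℝ) ≤ (1/2)^j * N :=
      mul_le_mul_of_nonneg_left hNN hx0
    rw [e1] at r2
    rw [e2] at r1 g'
    nlinarith [m1, g', r1, r2, hc1, hc2, hcard', hxN]
  -- the key density estimate, general version
  have hdkey2 : ∀ j N : ℕ, Nf (j+2) < N → (1 - (1/2)^j) * N ≤ (cnt T N : ℝ) := by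
    intro j N hjN
    have hex : ∃ i : ℕ, N ≤ Nf (j+i+3) := by
      refine ⟨N, ?_⟩
      have := hNfmono.le_apply (x := j+N+3)
      omega
    have hi₀ := Nat.find_spec hex
    set i₀ := Nat.find hex with hi₀def
    have hlow : Nf (j+i₀+2) < N := by
      rcases Nat.eq_zero_or_pos i₀ with h0 | h0
      · rw [h0]
        simpa using hjN
      · have hmin := Nat.find_min hex (m := i₀ - 1) (by omega)
        push_neg at hmin
        have he : j + (i₀-1) + 3 = j + i₀ + 2 := by omega
        rw [he] at hmin
        exact hmin
    have hmain := hdkey1 (j+i₀) N hlow (by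
      have : j + i₀ + 3 = j + i₀ + 3 := rfl
      exact hi₀)
    refine le_trans ?_ hmain
    have hmon : ((1:ℝ)/2)^(j+i₀) ≤ (1/2)^j :=
      pow_le_pow_of_le_one (by norm_num) (by norm_num) (by omega)
    have : (1 - (1/2:ℝ)^j) ≤ (1 - (1/2)^(j+i₀)) := by linarith
    exact mul_le_mul_of_nonneg_right this (Nat.cast_nonneg N)
  refine ⟨T, A, ?_, ?_⟩
  · -- density one
    rw [HasDensity]
    simp only [natCard_eq_cnt]
    rw [Metric.tendsto_atTop]
    intro δ hδ
    obtain ⟨k, hk⟩ := exists_pow_lt_of_lt_one hδ (show (1:ℝ)/2 < 1 by norm_num)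
    refine ⟨Nf (k+2) + 1, fun N hN => ?_⟩
    have hN' : Nf (k+2) < N := by omega
    have h1 := hdkey2 k N hN'
    have hN1 : 1 ≤ N := by omega
    have hNpos : (0:ℝ) < N := by exact_mod_cast hN1
    have hle1 : (cnt T N : ℝ)/N ≤ 1 := by
      rw [div_le_one hNpos]
      exact_mod_cast cnt_le T N
    have hge : 1 - (1/2)^k ≤ (cnt T N : ℝ)/N := by
      rw [le_div_iff₀ hNpos]
      linarith
    rw [Real.dist_eq, abs_sub_comm, abs_of_nonneg (by linarith)]
    linarith
  · -- convergence along T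
    rw [Metric.tendsto_nhds]
    intro δ hδ
    obtain ⟨k, hk⟩ := exists_pow_lt_of_lt_one hδ (show (1:ℝ)/2 < 1 by norm_num)
    rw [Filter.eventually_inf_principal, Filter.eventually_atTop]
    refine ⟨Nf (k+1) + 1, fun n hn hnT => ?_⟩
    have := hkey k n hnT (by omega)
    linarith
end

section
/- Let (X, μ) be a finite measure space with 0 < μ(X) < ∞, let β : X → X be an invertible measure-preserving transformation which is ergodic, and let γ : X → ℝ be measurable with γ(x) > 0 for every x. Suppose ρ : X → ℝ is a measurable function satisfying ρ(ζ) = (γ(ζ)/γ(β(ζ))) · ρ(β(ζ)) for μ-almost every ζ (i.e. ρ is invariant under the weighted composition operator T). Then there is a constant c ∈ ℝ such that ρ(ζ) = c·γ(ζ) for μ-almost every ζ. -/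
open MeasureTheory
open scoped ENNReal

/-- If `β` is an ergodic invertible measure-preserving transformation of a finite measure
space, `γ > 0` is measurable, and `ρ` satisfies `ρ(ζ) = (γ(ζ)/γ(β ζ)) ρ(β ζ)` a.e. (i.e. `ρ`
is invariant under the weighted composition operator), then `ρ = c·γ` a.e. for some constant
`c`. -/
theorem stmt3 {X : Type*} [MeasurableSpace X] (μ : Measure X)
    (hμpos : 0 < μ Set.univ) (hμfin : μ Set.univ < ⊤)
    (β : X ≃ᵐ X) (hβ : MeasurePreserving β μ μ) (hβ' : MeasurePreserving β.symm μ μ)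
    (herg : Ergodic β μ)
    (γ : X → ℝ) (hγ : Measurable γ) (hγpos : ∀ x, 0 < γ x)
    (ρ : X → ℝ) (hρ : Measurable ρ)
    (hinv : ∀ᵐ ζ ∂μ, ρ ζ = (γ ζ / γ (β ζ)) * ρ (β ζ)) :
    ∃ c : ℝ, ∀ᵐ ζ ∂μ, ρ ζ = c * γ ζ := by
  set g : X → ℝ := fun ζ => ρ ζ / γ ζ with hg
  have hgm : Measurable g := hρ.div hγ
  have hg_eq : g ∘ β =ᵐ[μ] g := by
    filter_upwards [hinv] with ζ h
    have h1 : γ ζ ≠ 0 := (hγpos ζ).ne'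
    have h2 : γ (β ζ) ≠ 0 := (hγpos (β ζ)).ne'
    simp only [g, Function.comp_apply]
    field_simp
    rw [h]; field_simp
  obtain ⟨c, hc⟩ := herg.ae_eq_const_of_ae_eq_comp₀ hgm.nullMeasurable hg_eq
  refine ⟨c, ?_⟩
  filter_upwards [hc] with ζ h
  have h1 : γ ζ ≠ 0 := (hγpos ζ).ne'
  have : ρ ζ / γ ζ = c := h
  field_simp at this
  linarith [this]
end

section
/- Let (X, μ) be a finite measure space with 0 < μ(X) < ∞, let β : X → X be an invertible measure-preserving transformation which is ergodic, and let γ : X → ℝ be measurable with γ(x) > 0 for every x. Let f : X → ℂ be measurable with ∫_X |f|² γ⁻² dμ < ∞. Then the averages (1/N) Σ_{n=1}^N Tⁿf converge in L²(X, γ⁻² dμ) to (c_f)·γ, where c_f = (∫_X f γ⁻¹ dμ)/μ(X); that is, lim_{N→∞} ∫_X | (1/N) Σ_{n=1}^N (Tⁿf)(ζ) − c_f γ(ζ) |² γ(ζ)⁻² dμ(ζ) = 0, where (Tⁿf)(ζ) = (γ(ζ)/γ(βⁿ(ζ))) f(βⁿ(ζ)). -/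
open MeasureTheory Filter
open scoped ENNReal Topology

lemma ofReal_abs_sq (z : ℂ) :
    ENNReal.ofReal (‖z‖ ^ 2) = (‖z‖₊ : ℝ≥0∞) ^ 2 := by
  rw [ENNReal.ofReal_pow (norm_nonneg z), ofReal_norm]
  rfl

lemma lintegral_sq_eq_ofReal_norm {X : Type*} [MeasurableSpace X] {μ : Measure X}
    (H : Lp ℂ 2 μ) :
    ∫⁻ ζ, (‖H ζ‖₊ : ℝ≥0∞) ^ 2 ∂μ = ENNReal.ofReal (‖H‖ ^ 2) := by
  rw [Lp.norm_def, ← ENNReal.toReal_pow, ENNReal.ofReal_toReal (by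
    exact ENNReal.pow_ne_top (Lp.eLpNorm_ne_top H)),
    eLpNorm_eq_lintegral_rpow_enorm_toReal two_ne_zero ENNReal.ofNat_ne_top]
  rw [← ENNReal.rpow_natCast _ 2, ← ENNReal.rpow_mul]
  norm_num
  rfl

lemma coeFn_finsetSum {X : Type*} [MeasurableSpace X] {μ : Measure X} {ι : Type*}
    (s : Finset ι) (F : ι → Lp ℂ 2 μ) :
    ⇑(∑ i ∈ s, F i) =ᵐ[μ] fun ζ => ∑ i ∈ s, F i ζ := by
  classical
  induction s using Finset.induction_on with
  | empty => simp only [Finset.sum_empty]; exact Lp.coeFn_zero ℂ 2 μ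
  | @insert a s ha ih =>
    rw [Finset.sum_insert ha]
    refine (Lp.coeFn_add _ _).trans ?_
    filter_upwards [ih] with ζ hζ
    rw [Pi.add_apply, hζ, Finset.sum_insert ha]

set_option maxHeartbeats 1000000 in
set_option synthInstance.maxHeartbeats 1000000 in
/-- Mean ergodic theorem for the weighted composition operator
`(Tf)(ζ) = (γ(ζ)/γ(β ζ)) f(β ζ)`: if `β` is ergodic and `∫ |f|² γ⁻² dμ < ∞`, then the
averages `(1/N) Σ_{n=1}^N Tⁿf` converge in `L²(γ⁻² dμ)` to `c_f · γ`, where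
`c_f = (∫ f γ⁻¹ dμ)/μ(X)`. -/
theorem stmt5 {X : Type*} [MeasurableSpace X] (μ : Measure X)
    (hμpos : 0 < μ Set.univ) (hμfin : μ Set.univ < ⊤)
    (β : X ≃ᵐ X) (hβ : MeasurePreserving β μ μ) (hβ' : MeasurePreserving β.symm μ μ)
    (herg : Ergodic β μ)
    (γ : X → ℝ) (hγ : Measurable γ) (hγpos : ∀ x, 0 < γ x)
    (f : X → ℂ) (hf : Measurable f)
    (hL2 : ∫⁻ ζ, ENNReal.ofReal (‖f ζ‖ ^ 2 / (γ ζ) ^ 2) ∂μ < ⊤)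
    (c : ℂ) (hc : c = (∫ ζ, f ζ * ((γ ζ : ℂ))⁻¹ ∂μ) / ((μ Set.univ).toReal : ℂ)) :
    Filter.Tendsto (fun N : ℕ =>
        ∫⁻ ζ, ENNReal.ofReal
          (‖(N : ℂ)⁻¹ *
              (∑ n ∈ Finset.Icc 1 N, ((γ ζ : ℂ) / (γ ((⇑β)^[n] ζ) : ℂ)) * f ((⇑β)^[n] ζ))
            - c * (γ ζ : ℂ)‖ ^ 2 / (γ ζ) ^ 2) ∂μ)
      Filter.atTop (𝓝 0) := by
  haveI : IsFiniteMeasure μ := ⟨hμfin⟩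
  haveI : Nonempty X := by
    rcases isEmpty_or_nonempty X with h | h
    · exact absurd (by simp [Set.univ_eq_empty_iff.mpr h] : μ Set.univ = 0) hμpos.ne'
    · exact h
  set g₀ : X → ℂ := fun ζ => f ζ * ((γ ζ : ℂ))⁻¹ with hg₀
  have hγC : ∀ x, ((γ x : ℂ)) ≠ 0 := fun x =>
    Complex.ofReal_ne_zero.mpr (hγpos x).ne'
  have hg₀m : Measurable g₀ := hf.mul ((Complex.measurable_ofReal.comp hγ).inv)
  -- membership in L²
  have hg_mem : MemLp g₀ 2 μ := by
    refine ⟨hg₀m.aestronglyMeasurable, ?_⟩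
    rw [eLpNorm_eq_lintegral_rpow_enorm_toReal two_ne_zero ENNReal.ofNat_ne_top]
    refine ENNReal.rpow_lt_top_of_nonneg (by norm_num) ?_
    have : ∀ ζ, ((‖g₀ ζ‖₊ : ℝ≥0∞)) ^ (2 : ℝ≥0∞).toReal
        = ENNReal.ofReal (‖f ζ‖ ^ 2 / (γ ζ) ^ 2) := by
      intro ζ
      have h1 : ‖f ζ‖ ^ 2 / (γ ζ) ^ 2 = ‖g₀ ζ‖ ^ 2 := by
        rw [hg₀]
        simp only [norm_mul, norm_inv, Complex.norm_real, Real.norm_eq_abs, abs_of_pos (hγpos ζ)]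
        rw [mul_pow, div_eq_mul_inv, inv_pow]
      rw [h1, ofReal_abs_sq]
      norm_num
    change ∫⁻ ζ, ((‖g₀ ζ‖₊ : ℝ≥0∞)) ^ (2 : ℝ≥0∞).toReal ∂μ ≠ ⊤
    rw [lintegral_congr this]
    exact hL2.ne
  set G : Lp ℂ 2 μ := hg_mem.toLp g₀ with hGdef
  have hGfn : ⇑G =ᵐ[μ] g₀ := hg_mem.coeFn_toLp
  -- the composition operator
  obtain ⟨U, hUnorm, hUapply⟩ :
      ∃ U : Lp ℂ 2 μ →L[ℂ] Lp ℂ 2 μ, ‖U‖ ≤ 1 ∧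
        ∀ H : Lp ℂ 2 μ, ⇑(U H) =ᵐ[μ] (⇑H) ∘ ⇑β := by
    refine ⟨LinearMap.mkContinuous (Lp.compMeasurePreservingₗ ℂ (⇑β) hβ) 1
      (fun x => by simp [(Lp.norm_compMeasurePreserving x hβ).le]), ?_, ?_⟩
    · exact LinearMap.mkContinuous_norm_le _ zero_le_one _
    · exact fun H => Lp.coeFn_compMeasurePreserving H hβ
  -- iterates of U
  have hUn : ∀ n : ℕ, ⇑(U^[n] G) =ᵐ[μ] fun ζ => g₀ ((⇑β)^[n] ζ) := by
    intro n
    induction n with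
    | zero => simpa using hGfn
    | succ n ih =>
      rw [Function.iterate_succ_apply']
      refine (hUapply _).trans ?_
      refine (hβ.quasiMeasurePreserving.ae_eq_comp ih).trans ?_
      filter_upwards with ζ
      simp [Function.iterate_succ_apply]
  -- von Neumann mean ergodic theorem
  have hmain := ContinuousLinearMap.tendsto_birkhoffAverage_orthogonalProjection U hUnorm G
  set Q : Lp ℂ 2 μ := (Submodule.orthogonalProjectionOnto (U.eqLocus (1 : Lp ℂ 2 μ →L[ℂ] Lp ℂ 2 μ)) G : Lp ℂ 2 μ) with hQdef
  have hUQ : U Q = Q := by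
    have := (Submodule.orthogonalProjectionOnto (U.eqLocus (1 : Lp ℂ 2 μ →L[ℂ] Lp ℂ 2 μ)) G).2
    rw [LinearMap.mem_eqLocus] at this
    simpa [hQdef] using this
  -- Q is a.e. constant by ergodicity
  have hQinv : (⇑Q) ∘ ⇑β =ᵐ[μ] ⇑Q := by
    have := hUapply Q
    rw [hUQ] at this
    exact this.symm
  obtain ⟨k, hk⟩ := herg.ae_eq_const_of_ae_eq_comp_ae (Lp.aestronglyMeasurable Q) hQinv
  -- the constant one function lies in the fixed space
  set one : Lp ℂ 2 μ := (memLp_const (1 : ℂ)).toLp (fun _ => (1 : ℂ)) with honedef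
  have hone : ⇑one =ᵐ[μ] fun _ => (1 : ℂ) := MemLp.coeFn_toLp _
  have honeK : one ∈ U.eqLocus (1 : Lp ℂ 2 μ →L[ℂ] Lp ℂ 2 μ) := by
    rw [LinearMap.mem_eqLocus]
    change U one = one
    refine Lp.ext ?_
    refine (hUapply one).trans ?_
    refine (hβ.quasiMeasurePreserving.ae_eq_comp hone).trans ?_
    exact hone.symm
  -- identify the constant k with c
  have hinner0 : @inner ℂ _ _ one (G - Q) = 0 := by
    have horth := Submodule.sub_starProjection_mem_orthogonal
      (K := U.eqLocus (1 : Lp ℂ 2 μ →L[ℂ] Lp ℂ 2 μ)) G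
    exact ((Submodule.mem_orthogonal _ _).mp horth) one honeK
  have hgint : Integrable g₀ μ := hg_mem.integrable one_le_two
  have hintegral : ∫ a, (g₀ a - k) ∂μ = 0 := by
    rw [← hinner0, L2.inner_def]
    refine (integral_congr_ae ?_).symm
    filter_upwards [hone, Lp.coeFn_sub G Q, hGfn, hk] with a h1 h2 h3 h4
    rw [RCLike.inner_apply, h1, h2, Pi.sub_apply, h3, h4]
    simp
  have hμtr : ((μ Set.univ).toReal : ℂ) ≠ 0 :=
    Complex.ofReal_ne_zero.mpr (ENNReal.toReal_pos hμpos.ne' hμfin.ne).ne'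
  have hkc : k = c := by
    rw [integral_sub hgint (integrable_const k), integral_const, sub_eq_zero] at hintegral
    rw [hc, hintegral, Complex.real_smul]
    exact (mul_div_cancel_left₀ k hμtr).symm
  have hQc : ⇑Q =ᵐ[μ] fun _ => c := by
    rw [← hkc]; exact hk
  -- birkhoff averages at U G converge to Q
  have hcomm : ∀ N : ℕ, birkhoffAverage ℂ U _root_.id N (U G)
      = U (birkhoffAverage ℂ U _root_.id N G) := by
    intro N
    simp only [birkhoffAverage, birkhoffSum, id_eq]
    rw [_root_.map_smul, map_sum]
    refine congrArg _ (Finset.sum_congr rfl fun n _ => ?_)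
    rw [← Function.iterate_succ_apply, Function.iterate_succ_apply']
  have hlim : Tendsto (fun N => birkhoffAverage ℂ U _root_.id N (U G)) atTop (𝓝 Q) := by
    have h1 : Tendsto (fun N => U (birkhoffAverage ℂ U _root_.id N G)) atTop (𝓝 (U Q)) :=
      (U.continuous.tendsto Q).comp hmain
    rw [hUQ] at h1
    exact h1.congr fun N => (hcomm N).symm
  have hnorm0 : Tendsto (fun N => ‖birkhoffAverage ℂ U _root_.id N (U G) - Q‖)
      atTop (𝓝 0) := tendsto_iff_norm_sub_tendsto_zero.mp hlim
  have hsq : Tendsto (fun N => ENNReal.ofReal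
      (‖birkhoffAverage ℂ U _root_.id N (U G) - Q‖ ^ 2)) atTop (𝓝 0) := by
    have h2 : Tendsto (fun N => ‖birkhoffAverage ℂ U _root_.id N (U G) - Q‖ ^ 2)
        atTop (𝓝 0) := by simpa using hnorm0.pow 2
    have := (ENNReal.continuous_ofReal.tendsto 0).comp h2
    simpa [Function.comp_def] using this
  -- identify each term with the desired lintegral
  refine hsq.congr fun N => ?_
  -- coeFn identification of the birkhoff average
  have hbA : ⇑(birkhoffAverage ℂ U _root_.id N (U G))
      =ᵐ[μ] fun ζ => (N : ℂ)⁻¹ * ∑ n ∈ Finset.Icc 1 N, g₀ ((⇑β)^[n] ζ) := by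
    have h1 : birkhoffAverage ℂ U _root_.id N (U G)
        = (N : ℂ)⁻¹ • ∑ n ∈ Finset.range N, U^[n + 1] G := by
      simp only [birkhoffAverage, birkhoffSum, id_eq]
      refine congrArg _ (Finset.sum_congr rfl fun n _ => ?_)
      rw [← Function.iterate_succ_apply]
    rw [h1]
    refine (Lp.coeFn_smul _ _).trans ?_
    have h2 := coeFn_finsetSum (Finset.range N) (fun n => U^[n + 1] G)
    have h3 : ∀ᵐ ζ ∂μ, ∀ n ∈ Finset.range N, (U^[n + 1] G) ζ = g₀ ((⇑β)^[n + 1] ζ) :=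
      (Filter.eventually_all_finset _).mpr fun n _ => hUn (n + 1)
    filter_upwards [h2, h3] with ζ h2ζ h3ζ
    simp only [Pi.smul_apply, h2ζ, smul_eq_mul]
    congr 1
    rw [Finset.sum_congr rfl h3ζ, ← Finset.Ico_add_one_right_eq_Icc, Finset.sum_Ico_eq_sum_range]
    simp [add_comm]
  have hD : ⇑(birkhoffAverage ℂ U _root_.id N (U G) - Q)
      =ᵐ[μ] fun ζ => ((N : ℂ)⁻¹ * ∑ n ∈ Finset.Icc 1 N, g₀ ((⇑β)^[n] ζ)) - c := by
    filter_upwards [Lp.coeFn_sub (birkhoffAverage ℂ U _root_.id N (U G)) Q, hbA, hQc]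
      with ζ h1 h2 h3
    rw [h1, Pi.sub_apply, h2, h3]
  rw [← lintegral_sq_eq_ofReal_norm]
  refine lintegral_congr_ae ?_
  filter_upwards [hD] with ζ hζ
  rw [hζ]
  -- pointwise algebraic identity
  have hsum : ∑ n ∈ Finset.Icc 1 N, ((γ ζ : ℂ) / (γ ((⇑β)^[n] ζ) : ℂ)) * f ((⇑β)^[n] ζ)
      = (γ ζ : ℂ) * ∑ n ∈ Finset.Icc 1 N, g₀ ((⇑β)^[n] ζ) := by
    rw [Finset.mul_sum]
    refine Finset.sum_congr rfl fun n _ => ?_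
    rw [hg₀]
    rw [div_mul_eq_mul_div, div_eq_mul_inv]
    ring
  have hEq : (N : ℂ)⁻¹ *
        (∑ n ∈ Finset.Icc 1 N, ((γ ζ : ℂ) / (γ ((⇑β)^[n] ζ) : ℂ)) * f ((⇑β)^[n] ζ))
        - c * (γ ζ : ℂ)
      = (γ ζ : ℂ) * (((N : ℂ)⁻¹ * ∑ n ∈ Finset.Icc 1 N, g₀ ((⇑β)^[n] ζ)) - c) := by
    rw [hsum]; ring
  rw [hEq, norm_mul, Complex.norm_real, Real.norm_eq_abs, abs_of_pos (hγpos ζ), mul_pow,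
    mul_div_cancel_left₀ _ (pow_ne_zero 2 (hγpos ζ).ne'), ofReal_abs_sq]
end

section
/- Let (X, μ) be a finite measure space with 0 < μ(X) < ∞, let β : X → X be an invertible measure-preserving transformation which is ergodic, and let γ : X → ℝ be measurable with γ(x) > 0 for every x. Suppose ρ : X → ℝ is a measurable function satisfying ρ(ζ) = (γ(β⁻¹(ζ))/γ(ζ)) · ρ(β⁻¹(ζ)) for μ-almost every ζ (i.e. ρ is invariant under the adjoint weighted composition operator T*). Then there is a constant c ∈ ℝ such that ρ(ζ) = c·γ(ζ)⁻¹ for μ-almost every ζ. -/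
open MeasureTheory

/-!
Multiplying by `γ` conjugates `T*` to the plain composition `f ↦ f ∘ β⁻¹`: the function
`γ ρ` is therefore `β`-invariant almost everywhere, hence almost everywhere constant by
ergodicity.
-/

theorem MeasureTheory.Measure.QuasiMeasurePreserving.comp_ae_eq_of_ae_eq_comp_symm
    {X α : Type*} [MeasurableSpace X] {μ : Measure X} {β : X ≃ᵐ X}
    (hβ : Measure.QuasiMeasurePreserving β μ μ) {f : X → α} (hf : f =ᵐ[μ] f ∘ β.symm) :
    f ∘ β =ᵐ[μ] f := by
  filter_upwards [hβ.ae_eq_comp hf] with ζ hζ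
  simpa using hζ

theorem mul_ae_eq_comp_of_ae_eq_weighted_comp {X 𝕜 : Type*} [MeasurableSpace X] [Field 𝕜]
    {μ : Measure X} {e : X → X} {γ ρ : X → 𝕜} (hγ : ∀ x, γ x ≠ 0)
    (hρ : ∀ᵐ ζ ∂μ, ρ ζ = γ (e ζ) / γ ζ * ρ (e ζ)) :
    γ * ρ =ᵐ[μ] (γ * ρ) ∘ e := by
  filter_upwards [hρ] with ζ hζ
  rw [Pi.mul_apply, hζ, Function.comp_apply, Pi.mul_apply]
  field_simp [hγ ζ]

theorem stmt6_general {X : Type*} [MeasurableSpace X] (μ : Measure X)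
    (β : X ≃ᵐ X)
    (herg : Ergodic β μ)
    (γ : X → ℝ) (hγ : Measurable γ) (hγpos : ∀ x, 0 < γ x)
    (ρ : X → ℝ) (hρ : Measurable ρ)
    (hinv : ∀ᵐ ζ ∂μ, ρ ζ = (γ (β.symm ζ) / γ ζ) * ρ (β.symm ζ)) :
    ∃ c : ℝ, ∀ᵐ ζ ∂μ, ρ ζ = c * (γ ζ)⁻¹ := by
  have hγ₀ : ∀ x, γ x ≠ 0 := fun x => (hγpos x).ne'
  have hinvariant : (γ * ρ) ∘ β =ᵐ[μ] γ * ρ :=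
    herg.quasiMeasurePreserving.comp_ae_eq_of_ae_eq_comp_symm
      (mul_ae_eq_comp_of_ae_eq_weighted_comp hγ₀ hinv)
  obtain ⟨c, hc⟩ := herg.ae_eq_const_of_ae_eq_comp₀ (hγ.mul hρ).nullMeasurable hinvariant
  refine ⟨c, hc.mono fun ζ hζ => ?_⟩
  rw [Pi.mul_apply, Function.const_apply] at hζ
  rw [← hζ]
  field_simp [hγ₀ ζ]

/-- If `β` is an ergodic invertible measure-preserving transformation of a finite measure
space, `γ > 0` is measurable, and `ρ` satisfies `ρ(ζ) = (γ(β⁻¹ ζ)/γ(ζ)) ρ(β⁻¹ ζ)` a.e.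
(i.e. `ρ` is invariant under the adjoint weighted composition operator `T*`), then
`ρ = c·γ⁻¹` a.e. for some constant `c`. -/
theorem stmt6 {X : Type*} [MeasurableSpace X] (μ : Measure X)
    (hμpos : 0 < μ Set.univ) (hμfin : μ Set.univ < ⊤)
    (β : X ≃ᵐ X) (hβ : MeasurePreserving β μ μ) (hβ' : MeasurePreserving β.symm μ μ)
    (herg : Ergodic β μ)
    (γ : X → ℝ) (hγ : Measurable γ) (hγpos : ∀ x, 0 < γ x)
    (ρ : X → ℝ) (hρ : Measurable ρ)
    (hinv : ∀ᵐ ζ ∂μ, ρ ζ = (γ (β.symm ζ) / γ ζ) * ρ (β.symm ζ)) :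
    ∃ c : ℝ, ∀ᵐ ζ ∂μ, ρ ζ = c * (γ ζ)⁻¹ :=
  stmt6_general μ β herg γ hγ hγpos ρ hρ hinv
end

section
/- Let (X, μ) be a finite measure space with 0 < μ(X) < ∞, let β : X → X be an invertible measure-preserving transformation which is ergodic, and let γ : X → ℝ be measurable with γ(x) > 0 for every x. Let f : X → ℂ be measurable with ∫_X |f|² γ² dμ < ∞. Then the averages (1/N) Σ_{n=1}^N (T*)ⁿf converge in L²(X, γ² dμ) to (d_f)·γ⁻¹, where d_f = (∫_X f γ dμ)/μ(X); that is, lim_{N→∞} ∫_X | (1/N) Σ_{n=1}^N ((T*)ⁿf)(ζ) − d_f γ(ζ)⁻¹ |² γ(ζ)² dμ(ζ) = 0, where ((T*)ⁿf)(ζ) = (γ(β⁻ⁿ(ζ))/γ(ζ)) f(β⁻ⁿ(ζ)). -/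
open MeasureTheory Filter
open scoped ENNReal Topology

set_option maxHeartbeats 2000000 in
set_option synthInstance.maxHeartbeats 1000000 in
/-- Mean ergodic theorem for the adjoint weighted composition operator
`(T*f)(ζ) = (γ(β⁻¹ ζ)/γ(ζ)) f(β⁻¹ ζ)`: if `β` is ergodic and `∫ |f|² γ² dμ < ∞`, then the
averages `(1/N) Σ_{n=1}^N (T*)ⁿf` converge in `L²(γ² dμ)` to `d_f · γ⁻¹`, where
`d_f = (∫ f γ dμ)/μ(X)`. -/
theorem stmt8 {X : Type*} [MeasurableSpace X] (μ : Measure X)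
    (hμpos : 0 < μ Set.univ) (hμfin : μ Set.univ < ⊤)
    (β : X ≃ᵐ X) (hβ : MeasurePreserving β μ μ) (hβ' : MeasurePreserving β.symm μ μ)
    (herg : Ergodic β μ)
    (γ : X → ℝ) (hγ : Measurable γ) (hγpos : ∀ x, 0 < γ x)
    (f : X → ℂ) (hf : Measurable f)
    (hL2 : ∫⁻ ζ, ENNReal.ofReal (‖f ζ‖ ^ 2 * (γ ζ) ^ 2) ∂μ < ⊤)
    (d : ℂ) (hd : d = (∫ ζ, f ζ * (γ ζ : ℂ) ∂μ) / ((μ Set.univ).toReal : ℂ)) :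
    Filter.Tendsto (fun N : ℕ =>
        ∫⁻ ζ, ENNReal.ofReal
          (‖(N : ℂ)⁻¹ *
              (∑ n ∈ Finset.Icc 1 N,
                ((γ ((⇑β.symm)^[n] ζ) : ℂ) / (γ ζ : ℂ)) * f ((⇑β.symm)^[n] ζ))
            - d * ((γ ζ : ℂ))⁻¹‖ ^ 2 * (γ ζ) ^ 2) ∂μ)
      Filter.atTop (𝓝 0) := by
  haveI : IsFiniteMeasure μ := ⟨hμfin⟩
  classical
  set S : X → X := ⇑β.symm with hSdef
  -- `S` is ergodic
  have hSerg : Ergodic S μ := by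
    refine ⟨hβ', ⟨fun s hs hinv => ?_⟩⟩
    refine herg.aeconst_set hs ?_
    have h2 : β ⁻¹' (S ⁻¹' s) = s := by
      ext x; simp [hSdef]
    calc β ⁻¹' s = β ⁻¹' (S ⁻¹' s) := by rw [hinv]
      _ = s := h2
  set g : X → ℂ := fun ζ => f ζ * (γ ζ : ℂ) with hgdef
  have hγc : ∀ ζ, (γ ζ : ℂ) ≠ 0 := fun ζ => Complex.ofReal_ne_zero.2 (hγpos ζ).ne'
  have hgm : Measurable g := hf.mul (Complex.measurable_ofReal.comp hγ)
  have hnorm_g : ∀ ζ, ((‖g ζ‖₊ : ℝ≥0∞)) ^ 2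
      = ENNReal.ofReal (‖f ζ‖ ^ 2 * γ ζ ^ 2) := by
    intro ζ
    rw [← enorm_eq_nnnorm, ← ofReal_norm, ← ENNReal.ofReal_pow (norm_nonneg _)]
    congr 1
    simp only [hgdef, norm_mul, Complex.norm_real, Real.norm_eq_abs,
      abs_of_pos (hγpos ζ), mul_pow]
  have hsq : ∀ u : X → ℂ,
      (∫⁻ ζ, ((‖u ζ‖₊ : ℝ≥0∞)) ^ 2 ∂μ) = (eLpNorm u 2 μ) ^ 2 := by
    intro u
    have h1 : ∫⁻ ζ, ((‖u ζ‖₊ : ℝ≥0∞)) ^ 2 ∂μ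
        = ∫⁻ ζ, ((‖u ζ‖₊ : ℝ≥0∞)) ^ ((2 : ℝ≥0∞).toReal) ∂μ := by
      refine lintegral_congr fun ζ => ?_
      rw [ENNReal.toReal_ofNat, ← ENNReal.rpow_natCast]
      norm_num
    rw [eLpNorm_eq_lintegral_rpow_enorm_toReal two_ne_zero ENNReal.ofNat_ne_top, h1,
      ← ENNReal.rpow_natCast _ 2, ← ENNReal.rpow_mul]
    norm_num
    rfl
  have hgmem : MemLp g 2 μ := by
    refine ⟨hgm.aestronglyMeasurable, ?_⟩
    have h2 : (eLpNorm g 2 μ) ^ 2 < ⊤ := by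
      rw [← hsq g]
      calc ∫⁻ ζ, ((‖g ζ‖₊ : ℝ≥0∞)) ^ 2 ∂μ
          = ∫⁻ ζ, ENNReal.ofReal (‖f ζ‖ ^ 2 * γ ζ ^ 2) ∂μ :=
            lintegral_congr fun ζ => hnorm_g ζ
        _ < ⊤ := hL2
    rcases eq_or_ne (eLpNorm g 2 μ) ⊤ with h | h
    · rw [h, ENNReal.top_pow two_ne_zero] at h2
      exact absurd h2 (lt_irrefl _)
    · exact h.lt_top
  -- the Koopman operator on L²
  have hUsmul : ∀ (c : ℂ) (h : Lp ℂ 2 μ),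
      Lp.compMeasurePreserving (E := ℂ) (p := 2) S hβ' (c • h)
        = c • Lp.compMeasurePreserving (E := ℂ) (p := 2) S hβ' h := by
    intro c h
    apply Lp.ext
    have h1 := Lp.coeFn_compMeasurePreserving (μ := μ) (c • h) hβ'
    have h2 := Lp.coeFn_compMeasurePreserving (μ := μ) h hβ'
    have h3 : ⇑(c • h) ∘ S =ᵐ[μ] (c • ⇑h) ∘ S :=
      hβ'.quasiMeasurePreserving.ae_eq (Lp.coeFn_smul c h)
    have h4 := Lp.coeFn_smul c (Lp.compMeasurePreserving (E := ℂ) (p := 2) S hβ' h)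
    filter_upwards [h1, h3, h4, h2] with ζ e1 e3 e4 e2
    calc (Lp.compMeasurePreserving S hβ' (c • h) : Lp ℂ 2 μ) ζ = (⇑(c • h) ∘ S) ζ := e1
      _ = ((c • ⇑h) ∘ S) ζ := e3
      _ = c • ((⇑h ∘ S) ζ) := rfl
      _ = c • ((Lp.compMeasurePreserving S hβ' h : Lp ℂ 2 μ) ζ) := by rw [e2]
      _ = (c • (Lp.compMeasurePreserving S hβ' h : Lp ℂ 2 μ)) ζ := (e4).symm
  set Ulin : Lp ℂ 2 μ →ₗ[ℂ] Lp ℂ 2 μ :=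
    { toFun := ⇑(Lp.compMeasurePreserving (E := ℂ) (p := 2) S hβ'),
      map_add' := map_add _, map_smul' := hUsmul } with hUlin
  have hUiso : ∀ h : Lp ℂ 2 μ, ‖Ulin h‖ = ‖h‖ := fun h =>
    Lp.norm_compMeasurePreserving h hβ'
  set U : Lp ℂ 2 μ →L[ℂ] Lp ℂ 2 μ :=
    Ulin.mkContinuous 1 (fun h => by rw [hUiso, one_mul]) with hUdef
  have hU1 : ‖U‖ ≤ 1 := Ulin.mkContinuous_norm_le zero_le_one _
  have hUapp : ∀ h : Lp ℂ 2 μ, ⇑(U h) =ᵐ[μ] ⇑h ∘ S := fun h =>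
    Lp.coeFn_compMeasurePreserving h hβ'
  set G : Lp ℂ 2 μ := hgmem.toLp g with hG
  set G' : Lp ℂ 2 μ := U G with hG'
  -- iterates of the Koopman operator
  have hiter : ∀ n : ℕ, ⇑((⇑U)^[n] G) =ᵐ[μ] fun ζ => g (S^[n] ζ) := by
    intro n
    induction n with
    | zero => simpa using hgmem.coeFn_toLp
    | succ n ih =>
      rw [Function.iterate_succ_apply']
      refine (hUapp _).trans ?_
      refine (hβ'.quasiMeasurePreserving.ae_eq ih).trans ?_
      filter_upwards with ζ
      simp only [Function.comp_apply, Function.iterate_succ_apply]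
  have hsum : ∀ (N : ℕ) (F : ℕ → Lp ℂ 2 μ),
      ⇑(∑ n ∈ Finset.range N, F n) =ᵐ[μ] fun ζ => ∑ n ∈ Finset.range N, F n ζ := by
    intro N F
    induction N with
    | zero => simp only [Finset.sum_range_zero]; exact Lp.coeFn_zero (E := ℂ) (p := 2) (μ := μ)
    | succ N ih =>
      rw [Finset.sum_range_succ]
      refine (Lp.coeFn_add _ _).trans ?_
      filter_upwards [ih] with ζ hζ
      simp only [Pi.add_apply, hζ, Finset.sum_range_succ]
  set A : ℕ → Lp ℂ 2 μ := fun N => birkhoffAverage ℂ (⇑U) id N G' with hA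
  have hAspec : ∀ N : ℕ, A N = (N : ℂ)⁻¹ • ∑ n ∈ Finset.range N, (⇑U)^[n] G' := by
    intro N
    simp [hA, birkhoffAverage, birkhoffSum]
  have hAcoe : ∀ N : ℕ,
      ⇑(A N) =ᵐ[μ] fun ζ => (N : ℂ)⁻¹ * ∑ n ∈ Finset.Icc 1 N, g (S^[n] ζ) := by
    intro N
    rw [hAspec N]
    refine (Lp.coeFn_smul _ _).trans ?_
    have h3 : ∀ᵐ ζ ∂μ, ∀ n ∈ Finset.range N, ((⇑U)^[n] G') ζ = g (S^[n + 1] ζ) := by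
      rw [Filter.eventually_all_finset]
      intro n _
      have hUG : (⇑U)^[n] G' = (⇑U)^[n + 1] G := by
        rw [hG', Function.iterate_succ_apply]
      rw [hUG]
      exact hiter (n + 1)
    filter_upwards [hsum N (fun n => (⇑U)^[n] G'), h3] with ζ e2 e3
    simp only [Pi.smul_apply, e2, smul_eq_mul]
    congr 1
    rw [← Finset.Ico_add_one_right_eq_Icc, Finset.sum_Ico_eq_sum_range]
    refine (Finset.sum_congr rfl fun n hn => ?_).symm
    rw [e3 n hn, add_comm 1 n]
  have hconv : Tendsto A atTop
      (𝓝 ((Submodule.orthogonalProjectionOnto (LinearMap.eqLocus U ((1 : Lp ℂ 2 μ →L[ℂ] Lp ℂ 2 μ) : Lp ℂ 2 μ →ₗ[ℂ] Lp ℂ 2 μ)) G' :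
        LinearMap.eqLocus U ((1 : Lp ℂ 2 μ →L[ℂ] Lp ℂ 2 μ) : Lp ℂ 2 μ →ₗ[ℂ] Lp ℂ 2 μ)) : Lp ℂ 2 μ)) :=
    U.tendsto_birkhoffAverage_orthogonalProjection hU1 G'
  set P : Lp ℂ 2 μ :=
    ((Submodule.orthogonalProjectionOnto (LinearMap.eqLocus U ((1 : Lp ℂ 2 μ →L[ℂ] Lp ℂ 2 μ) : Lp ℂ 2 μ →ₗ[ℂ] Lp ℂ 2 μ)) G' :
      LinearMap.eqLocus U ((1 : Lp ℂ 2 μ →L[ℂ] Lp ℂ 2 μ) : Lp ℂ 2 μ →ₗ[ℂ] Lp ℂ 2 μ)) : Lp ℂ 2 μ) with hPdef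
  have hPfix : U P = P := by
    have hmem := (Submodule.orthogonalProjectionOnto (LinearMap.eqLocus U ((1 : Lp ℂ 2 μ →L[ℂ] Lp ℂ 2 μ) : Lp ℂ 2 μ →ₗ[ℂ] Lp ℂ 2 μ)) G').2
    rw [LinearMap.mem_eqLocus] at hmem
    exact hmem
  have hPS : ⇑P ∘ S =ᵐ[μ] ⇑P := by
    have h1 := hUapp P
    rw [hPfix] at h1
    exact h1.symm
  obtain ⟨c, hc⟩ := hSerg.ae_eq_const_of_ae_eq_comp_ae (Lp.aestronglyMeasurable P) hPS
  -- identify the constant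
  set one : Lp ℂ 2 μ := indicatorConstLp 2 MeasurableSet.univ (measure_ne_top μ _) (1 : ℂ)
    with hone
  have hinner : ∀ h : Lp ℂ 2 μ, (inner ℂ one h : ℂ) = ∫ ζ, h ζ ∂μ := by
    intro h
    rw [hone, L2.inner_indicatorConstLp_one MeasurableSet.univ (measure_ne_top μ _) h,
      setIntegral_univ]
  have hint_g : ∀ n : ℕ, ∫ ζ, g (S^[n] ζ) ∂μ = ∫ ζ, g ζ ∂μ := by
    intro n
    induction n with
    | zero => simp
    | succ n ih =>
      have h5 : ∫ ζ, g (S^[n + 1] ζ) ∂μ = ∫ ζ, g (S^[n] ζ) ∂μ := by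
        have h6 := hβ'.integral_comp' (fun ζ => g (S^[n] ζ))
        simpa [Function.iterate_succ_apply] using h6
      rw [h5, ih]
  have hμt : (μ Set.univ).toReal ≠ 0 :=
    ENNReal.toReal_ne_zero.2 ⟨hμpos.ne', hμfin.ne⟩
  have hinnerA : ∀ N : ℕ, 1 ≤ N → (inner ℂ one (A N) : ℂ) = ∫ ζ, g ζ ∂μ := by
    intro N hN
    rw [hAspec N, inner_smul_right, inner_sum]
    have h7 : ∀ n ∈ Finset.range N, (inner ℂ one ((⇑U)^[n] G') : ℂ) = ∫ ζ, g ζ ∂μ := by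
      intro n _
      rw [hinner]
      have h4 : (⇑U)^[n] G' = (⇑U)^[n + 1] G := by rw [hG', Function.iterate_succ_apply]
      rw [h4, integral_congr_ae (hiter (n + 1)), hint_g]
    rw [Finset.sum_congr rfl h7, Finset.sum_const, Finset.card_range]
    have hNc : (N : ℂ) ≠ 0 := Nat.cast_ne_zero.2 (by omega)
    rw [nsmul_eq_mul, ← mul_assoc, inv_mul_cancel₀ hNc, one_mul]
  have hinnerP : (inner ℂ one P : ℂ) = ∫ ζ, g ζ ∂μ := by
    have ht : Tendsto (fun N => (inner ℂ one (A N) : ℂ)) atTop (𝓝 (inner ℂ one P)) :=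
      tendsto_const_nhds.inner hconv
    have heq : (fun N => (inner ℂ one (A N) : ℂ)) =ᶠ[atTop] fun _ => ∫ ζ, g ζ ∂μ := by
      filter_upwards [eventually_ge_atTop 1] with N hN
      exact hinnerA N hN
    exact tendsto_nhds_unique (ht.congr' heq) tendsto_const_nhds
  have hceq : c = d := by
    have h1 : (inner ℂ one P : ℂ) = ((μ Set.univ).toReal : ℂ) * c := by
      rw [hinner, integral_congr_ae hc]
      simp [integral_const, Complex.real_smul, measureReal_def]
    rw [hinnerP] at h1
    rw [hd]
    rw [show (∫ ζ, g ζ ∂μ) = ((μ Set.univ).toReal : ℂ) * c from h1]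
    rw [mul_comm, mul_div_assoc, div_self (Complex.ofReal_ne_zero.2 hμt), mul_one]
  have hPc : ⇑P =ᵐ[μ] fun _ => d := by
    refine hc.trans ?_
    filter_upwards with ζ
    simp [Function.const, hceq]
  -- final rewriting of the integral
  have hfin : ∀ N : ℕ,
      (∫⁻ ζ, ENNReal.ofReal
          (‖(N : ℂ)⁻¹ *
              (∑ n ∈ Finset.Icc 1 N,
                ((γ (S^[n] ζ) : ℂ) / (γ ζ : ℂ)) * f (S^[n] ζ))
            - d * ((γ ζ : ℂ))⁻¹‖ ^ 2 * (γ ζ) ^ 2) ∂μ)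
        = ENNReal.ofReal (‖A N - P‖) ^ 2 := by
    intro N
    have hpt : ∀ ζ : X, ENNReal.ofReal
          (‖(N : ℂ)⁻¹ *
              (∑ n ∈ Finset.Icc 1 N,
                ((γ (S^[n] ζ) : ℂ) / (γ ζ : ℂ)) * f (S^[n] ζ))
            - d * ((γ ζ : ℂ))⁻¹‖ ^ 2 * (γ ζ) ^ 2)
          = ((‖((N : ℂ)⁻¹ * ∑ n ∈ Finset.Icc 1 N, g (S^[n] ζ)) - d‖₊ : ℝ≥0∞)) ^ 2 := by
      intro ζ
      have hEw : ((N : ℂ)⁻¹ *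
              (∑ n ∈ Finset.Icc 1 N,
                ((γ (S^[n] ζ) : ℂ) / (γ ζ : ℂ)) * f (S^[n] ζ))
            - d * ((γ ζ : ℂ))⁻¹) * (γ ζ : ℂ)
          = ((N : ℂ)⁻¹ * ∑ n ∈ Finset.Icc 1 N, g (S^[n] ζ)) - d := by
        rw [sub_mul, mul_assoc, Finset.sum_mul, mul_assoc, inv_mul_cancel₀ (hγc ζ), mul_one]
        congr 2
        refine Finset.sum_congr rfl fun n _ => ?_
        rw [hgdef]
        field_simp
        ring_nf
        rw [mul_right_comm, mul_inv_cancel_right₀ (hγc ζ)]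
      rw [← enorm_eq_nnnorm, ← ofReal_norm, ← ENNReal.ofReal_pow (norm_nonneg _)]
      congr 1
      rw [← hEw]
      simp only [norm_mul, Complex.norm_real, Real.norm_eq_abs,
        abs_of_pos (hγpos ζ), mul_pow]
    calc (∫⁻ ζ, ENNReal.ofReal
          (‖(N : ℂ)⁻¹ *
              (∑ n ∈ Finset.Icc 1 N,
                ((γ (S^[n] ζ) : ℂ) / (γ ζ : ℂ)) * f (S^[n] ζ))
            - d * ((γ ζ : ℂ))⁻¹‖ ^ 2 * (γ ζ) ^ 2) ∂μ)
        = ∫⁻ ζ, ((‖((N : ℂ)⁻¹ * ∑ n ∈ Finset.Icc 1 N, g (S^[n] ζ)) - d‖₊ : ℝ≥0∞)) ^ 2 ∂μ :=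
          lintegral_congr fun ζ => hpt ζ
      _ = ∫⁻ ζ, ((‖(⇑(A N - P)) ζ‖₊ : ℝ≥0∞)) ^ 2 ∂μ := by
          refine lintegral_congr_ae ?_
          filter_upwards [hAcoe N, hPc, Lp.coeFn_sub (A N) P] with ζ e1 e2 e3
          rw [e3]
          simp only [Pi.sub_apply, e1, e2]
      _ = (eLpNorm (⇑(A N - P)) 2 μ) ^ 2 := hsq _
      _ = ENNReal.ofReal (‖A N - P‖) ^ 2 := by
          rw [Lp.norm_def, ENNReal.ofReal_toReal (Lp.eLpNorm_ne_top _)]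
  have h0 : Tendsto (fun N => ‖A N - P‖) atTop (𝓝 0) := by
    have := (hconv.sub (tendsto_const_nhds (x := P))).norm
    simpa using this
  have hmain : Tendsto (fun N => ENNReal.ofReal (‖A N - P‖) ^ 2) atTop (𝓝 0) := by
    have h1 : Tendsto (fun N => ENNReal.ofReal (‖A N - P‖)) atTop (𝓝 0) := by
      have := (ENNReal.continuous_ofReal.tendsto 0).comp h0
      simpa [Function.comp_def] using this
    have h2 := ((ENNReal.continuous_pow 2).tendsto 0).comp h1
    simpa [Function.comp_def] using h2
  exact hmain.congr fun N => (hfin N).symm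
end

section
/- (Karamata Tauberian theorem) Let μ be a positive Borel measure on [0, ∞) such that ∫_0^∞ e^{−tλ} dμ(λ) < ∞ for every t > 0, let α > 0 and a ≥ 0. If lim_{t→0⁺} t^α ∫_0^∞ e^{−tλ} dμ(λ) = a, then lim_{x→∞} x^{−α} μ([0, x]) = a/Γ(α + 1). -/
/-!
Karamata's argument. Call `f` admissible (`f ∈ karamataSubmodule μ α a`) when
`x^{-α} ∫ f(λ/x) dμ(λ) → (a / Γ(α)) ∫₀^∞ f(u) u^{α-1} du` as `x → ∞`. Admissible functions form a
vector space, and since `∫₀^∞ e^{-su} u^{α-1} du = Γ(α) s^{-α}`, the hypothesis says precisely that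
every `e^{-su}`, `s > 0`, is admissible; hence so is every `e^{-u} P(e^{-u})` with `P` a polynomial.
Because `μ ≥ 0` and `a ≥ 0`, a function squeezed between admissible functions whose weighted
integrals are arbitrarily close is admissible. By Weierstrass this covers `ψ(e^{-u})` for continuous
`ψ` vanishing near `0`, then, squeezing between such ramps, the indicator of `[0, 1]`, for which
the limit reads `x^{-α} μ([0, x]) → a / (α Γ(α)) = a / Γ(α + 1)`.
-/

open MeasureTheory Filter Set Real
open scoped Topology

theorem tendsto_of_forall_sandwich {ι : Type*} {l : Filter ι} {F : ι → ℝ} {c : ℝ}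
    (H : ∀ ε > 0, ∃ G₁ G₂ : ι → ℝ, ∃ b₁ b₂ : ℝ, Tendsto G₁ l (𝓝 b₁) ∧ Tendsto G₂ l (𝓝 b₂) ∧
      c - ε < b₁ ∧ b₂ < c + ε ∧ ∀ᶠ i in l, G₁ i ≤ F i ∧ F i ≤ G₂ i) :
    Tendsto F l (𝓝 c) := by
  refine tendsto_order.2 ⟨fun c' hc' => ?_, fun c' hc' => ?_⟩
  · obtain ⟨G₁, _, b₁, _, hG₁, _, hb₁, _, hle⟩ := H (c - c') (by linarith)
    filter_upwards [(tendsto_order.1 hG₁).1 c' (by linarith), hle] with i hi hle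
    linarith [hle.1]
  · obtain ⟨_, G₂, _, b₂, _, hG₂, _, hb₂, hle⟩ := H (c' - c) (by linarith)
    filter_upwards [(tendsto_order.1 hG₂).2 c' (by linarith), hle] with i hi hle
    linarith [hle.2]

theorem indicator_one_mul_apply {ι M₀ : Type*} [MulZeroOneClass M₀] (s : Set ι) (f : ι → M₀)
    (i : ι) : s.indicator 1 i * f i = s.indicator f i := by
  simpa using (indicator_mul_left s 1 f).symm

noncomputable def ramp (c₁ c₂ y : ℝ) : ℝ := max 0 (min 1 ((y - c₁) / (c₂ - c₁)))

theorem continuous_ramp (c₁ c₂ : ℝ) : Continuous (ramp c₁ c₂) := by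
  unfold ramp; fun_prop

theorem ramp_nonneg (c₁ c₂ y : ℝ) : 0 ≤ ramp c₁ c₂ y := le_max_left _ _

theorem ramp_le_one (c₁ c₂ y : ℝ) : ramp c₁ c₂ y ≤ 1 := max_le zero_le_one (min_le_left _ _)

theorem ramp_of_le {c₁ c₂ y : ℝ} (hc : c₁ ≤ c₂) (hy : y ≤ c₁) : ramp c₁ c₂ y = 0 :=
  max_eq_left <| (min_le_right _ _).trans <|
    div_nonpos_of_nonpos_of_nonneg (by linarith) (by linarith)

theorem ramp_of_ge {c₁ c₂ y : ℝ} (hc : c₁ < c₂) (hy : c₂ ≤ y) : ramp c₁ c₂ y = 1 := by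
  rw [ramp, min_eq_left ((one_le_div (by linarith)).2 (by linarith)), max_eq_right zero_le_one]

noncomputable def expRamp (p q u : ℝ) : ℝ := ramp (exp (-q)) (exp (-p)) (exp (-u))

theorem expRamp_of_le {p q u : ℝ} (hpq : p < q) (hu : u ≤ p) : expRamp p q u = 1 :=
  ramp_of_ge (exp_lt_exp.2 (neg_lt_neg hpq)) (exp_le_exp.2 (neg_le_neg hu))

theorem expRamp_of_ge {p q u : ℝ} (hpq : p ≤ q) (hu : q ≤ u) : expRamp p q u = 0 :=
  ramp_of_le (exp_le_exp.2 (neg_le_neg hpq)) (exp_le_exp.2 (neg_le_neg hu))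

theorem expRamp_nonneg (p q u : ℝ) : 0 ≤ expRamp p q u := ramp_nonneg _ _ _

theorem expRamp_le_one (p q u : ℝ) : expRamp p q u ≤ 1 := ramp_le_one _ _ _

theorem expRamp_le_indicator_Iic {p q : ℝ} (hpq : p ≤ q) (u : ℝ) :
    expRamp p q u ≤ (Iic q).indicator 1 u := by
  by_cases hu : u ≤ q
  · simpa [indicator_of_mem (mem_Iic.2 hu)] using expRamp_le_one p q u
  · simp [indicator_of_notMem (notMem_Iic.2 (not_le.1 hu)), expRamp_of_ge hpq (not_le.1 hu).le]

theorem indicator_Iic_le_expRamp {p q : ℝ} (hpq : p < q) (u : ℝ) :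
    (Iic p).indicator 1 u ≤ expRamp p q u := by
  by_cases hu : u ≤ p
  · simp [indicator_of_mem (mem_Iic.2 hu), expRamp_of_le hpq hu]
  · simpa [indicator_of_notMem (notMem_Iic.2 (not_le.1 hu))] using expRamp_nonneg p q u

theorem expRamp_sub_expRamp_le_indicator {p q r : ℝ} (hpq : p < q) (hqr : q < r) (u : ℝ) :
    expRamp q r u - expRamp p q u ≤ (Ioc p r).indicator 1 u := by
  by_cases hup : u ≤ p
  · rw [expRamp_of_le hqr (by linarith), expRamp_of_le hpq hup, sub_self]
    exact indicator_nonneg (fun _ _ => zero_le_one) u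
  by_cases hur : u ≤ r
  · rw [indicator_of_mem (show u ∈ Ioc p r from ⟨not_le.1 hup, hur⟩), Pi.one_apply]
    linarith [expRamp_le_one q r u, expRamp_nonneg p q u]
  · rw [indicator_of_notMem fun h => hur h.2, expRamp_of_ge hqr.le (by linarith),
      expRamp_of_ge hpq.le (by linarith), sub_self]

theorem exists_rpow_sub_rpow_lt {α ε : ℝ} (hα : 0 < α) (hε : 0 < ε) :
    ∃ γ β : ℝ, 0 < γ ∧ γ < 1 ∧ 1 < β ∧ β ^ α - γ ^ α < ε := by
  set m := min (1 / 2) (ε / 4)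
  have hm₀ : 0 < m := lt_min (by norm_num) (by positivity)
  have hm₁ : m ≤ 1 / 2 := min_le_left _ _
  have hmε : m ≤ ε / 4 := min_le_right _ _
  refine ⟨(1 - m) ^ α⁻¹, (1 + m) ^ α⁻¹, rpow_pos_of_pos (by linarith) _,
    rpow_lt_one (by linarith) (by linarith) (inv_pos.2 hα),
    one_lt_rpow (by linarith) (inv_pos.2 hα), ?_⟩
  rw [rpow_inv_rpow (by linarith) hα.ne', rpow_inv_rpow (by linarith) hα.ne']
  linarith

open Polynomial in
theorem exp_neg_mul_eval_mem_of_exp_neg_mul_mem {S : Submodule ℝ (ℝ → ℝ)}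
    (hexp : ∀ s > 0, (fun u => exp (-(s * u))) ∈ S) (r : ℝ[X]) :
    (fun u => exp (-u) * r.eval (exp (-u))) ∈ S := by
  have hexpand : (fun u => exp (-u) * r.eval (exp (-u))) =
      ∑ i ∈ Finset.range (r.natDegree + 1), r.coeff i • fun u => exp (-((i + 1) * u)) := by
    ext u
    simp only [eval_eq_sum_range, Finset.mul_sum, Finset.sum_apply, Pi.smul_apply, smul_eq_mul,
      ← exp_nat_mul]
    refine Finset.sum_congr rfl fun i _ => ?_
    rw [mul_left_comm, ← exp_add]
    ring_nf
  rw [hexpand]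
  exact Submodule.sum_mem _ fun i _ => Submodule.smul_mem _ _ (hexp _ (by positivity))

theorem ae_le_comp_div {μ : Measure ℝ} (hμ : ∀ᵐ l ∂μ, 0 ≤ l) {f g : ℝ → ℝ}
    (hfg : ∀ u ≥ 0, f u ≤ g u) {x : ℝ} (hx : 0 < x) : ∀ᵐ l ∂μ, f (l / x) ≤ g (l / x) :=
  hμ.mono fun _ hl => hfg _ (div_nonneg hl hx.le)

theorem ae_restrict_Ioi_mul_rpow_le {f g : ℝ → ℝ} (hfg : ∀ u ≥ 0, f u ≤ g u) (r : ℝ) :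
    ∀ᵐ u ∂volume.restrict (Ioi 0), f u * u ^ r ≤ g u * u ^ r :=
  (ae_restrict_mem measurableSet_Ioi).mono fun u hu =>
    mul_le_mul_of_nonneg_right (hfg u (le_of_lt hu)) (rpow_nonneg (le_of_lt hu) r)

section Karamata

variable {μ : Measure ℝ} {α a : ℝ}

variable (μ α a) in
def karamataSubmodule : Submodule ℝ (ℝ → ℝ) where
  carrier := {f | (∀ x > 0, Integrable (fun l => f (l / x)) μ) ∧
    IntegrableOn (fun u => f u * u ^ (α - 1)) (Ioi 0) ∧
    Tendsto (fun x => x ^ (-α) * ∫ l, f (l / x) ∂μ) atTop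
      (𝓝 (a / Gamma α * ∫ u in Ioi 0, f u * u ^ (α - 1)))}
  zero_mem' := by simp
  add_mem' := by
    rintro f g ⟨hf, hfw, hfl⟩ ⟨hg, hgw, hgl⟩
    simp only [mem_ofPred_eq, Pi.add_apply, add_mul]
    refine ⟨fun x hx => (hf x hx).add (hg x hx), hfw.add hgw, ?_⟩
    rw [integral_add hfw hgw, mul_add]
    refine (hfl.add hgl).congr' <| (eventually_gt_atTop 0).mono fun x hx => ?_
    dsimp only
    rw [integral_add (hf x hx) (hg x hx), mul_add]
  smul_mem' := by
    rintro c f ⟨hf, hfw, hfl⟩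
    simp only [mem_ofPred_eq, Pi.smul_apply, smul_eq_mul, mul_assoc, integral_const_mul]
    refine ⟨fun x hx => (hf x hx).const_mul c, hfw.const_mul c, ?_⟩
    convert hfl.const_mul c using 2 <;> ring

theorem exp_neg_mul_mem_karamataSubmodule (hα : 0 < α)
    (hint : ∀ t > 0, Integrable (fun l => exp (-(t * l))) μ)
    (hlim : Tendsto (fun t => t ^ α * ∫ l, exp (-(t * l)) ∂μ) (𝓝[>] 0) (𝓝 a))
    {s : ℝ} (hs : 0 < s) : (fun u => exp (-(s * u))) ∈ karamataSubmodule μ α a := by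
  have hscale : ∀ x l : ℝ, exp (-(s * (l / x))) = exp (-(s / x * l)) := fun x l => by ring_nf
  refine ⟨fun x hx => ?_, ?_, ?_⟩
  · simpa only [hscale] using hint (s / x) (div_pos hs hx)
  · refine (integrableOn_rpow_mul_exp_neg_mul_rpow (s := α - 1) (by linarith) one_pos hs).congr_fun
      (fun u _ => ?_) measurableSet_Ioi
    dsimp only
    rw [rpow_one, neg_mul, mul_comm]
  · have hsx : Tendsto (fun x => s / x) atTop (𝓝[>] 0) :=
      tendsto_nhdsWithin_of_tendsto_nhds_of_eventually_within _
        (tendsto_const_nhds.div_atTop tendsto_id)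
        ((eventually_gt_atTop 0).mono fun x hx => div_pos hs hx)
    have hgamma : ∫ u in Ioi 0, exp (-(s * u)) * u ^ (α - 1) = s ^ (-α) * Gamma α := by
      simp_rw [mul_comm (exp _)]
      rw [integral_rpow_mul_exp_neg_mul_Ioi hα hs, one_div, inv_rpow hs.le, rpow_neg hs.le]
    rw [hgamma, div_mul_eq_mul_div, mul_div_assoc,
      mul_div_cancel_right₀ _ (Gamma_pos_of_pos hα).ne', mul_comm]
    refine ((hlim.comp hsx).const_mul (s ^ (-α))).congr' <|
      (eventually_gt_atTop 0).mono fun x hx => ?_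
    simp only [Function.comp_apply, hscale]
    rw [div_rpow hs.le hx.le, rpow_neg hs.le, rpow_neg hx.le]
    field_simp [(rpow_pos_of_pos hs α).ne']

theorem mem_karamataSubmodule_of_sandwich (hα : 0 < α) (ha : 0 ≤ a) (hμ : ∀ᵐ l ∂μ, 0 ≤ l)
    {f : ℝ → ℝ} (hf : Measurable f)
    (H : ∀ ε > 0, ∃ g ∈ karamataSubmodule μ α a, ∃ h ∈ karamataSubmodule μ α a,
      (∀ u ≥ 0, g u ≤ f u ∧ f u ≤ h u) ∧ ∫ u in Ioi 0, (h u - g u) * u ^ (α - 1) < ε) :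
    f ∈ karamataSubmodule μ α a := by
  obtain ⟨g₀, ⟨hg₀, hg₀w, -⟩, h₀, ⟨hh₀, hh₀w, -⟩, hle₀, -⟩ := H 1 one_pos
  have hfint : ∀ x > 0, Integrable (fun l => f (l / x)) μ := fun x hx =>
    integrable_of_le_of_le (hf.comp (measurable_id.div_const x)).aestronglyMeasurable
      (ae_le_comp_div hμ (fun u hu => (hle₀ u hu).1) hx)
      (ae_le_comp_div hμ (fun u hu => (hle₀ u hu).2) hx) (hg₀ x hx) (hh₀ x hx)
  have hfw : IntegrableOn (fun u => f u * u ^ (α - 1)) (Ioi 0) :=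
    integrable_of_le_of_le ((hf.mul (measurable_id.pow_const _)).aestronglyMeasurable)
      (ae_restrict_Ioi_mul_rpow_le (fun u hu => (hle₀ u hu).1) _)
      (ae_restrict_Ioi_mul_rpow_le (fun u hu => (hle₀ u hu).2) _) hg₀w hh₀w
  refine ⟨hfint, hfw, tendsto_of_forall_sandwich fun ε hε => ?_⟩
  set K := a / Gamma α
  have hK : 0 ≤ K := div_nonneg ha (Gamma_pos_of_pos hα).le
  obtain ⟨g, ⟨hg, hgw, hgl⟩, h, ⟨hh, hhw, hhl⟩, hle, hgap⟩ := H (ε / (K + 1)) (by positivity)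
  have hgf := setIntegral_mono_ae_restrict hgw hfw
    (ae_restrict_Ioi_mul_rpow_le (fun u hu => (hle u hu).1) _)
  have hfh := setIntegral_mono_ae_restrict hfw hhw
    (ae_restrict_Ioi_mul_rpow_le (fun u hu => (hle u hu).2) _)
  simp only [sub_mul] at hgap
  rw [integral_sub hhw hgw] at hgap
  have hKε : K * (ε / (K + 1)) < ε := by
    rw [mul_div_assoc', div_lt_iff₀ (by positivity)]
    linarith
  refine ⟨_, _, _, _, hgl, hhl, by nlinarith, by nlinarith, ?_⟩
  filter_upwards [eventually_gt_atTop 0] with x hx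
  exact ⟨mul_le_mul_of_nonneg_left (integral_mono_ae (hg x hx) (hfint x hx)
      (ae_le_comp_div hμ (fun u hu => (hle u hu).1) hx)) (rpow_nonneg hx.le _),
    mul_le_mul_of_nonneg_left (integral_mono_ae (hfint x hx) (hh x hx)
      (ae_le_comp_div hμ (fun u hu => (hle u hu).2) hx)) (rpow_nonneg hx.le _)⟩

open Polynomial in
theorem comp_exp_neg_mem_karamataSubmodule (hα : 0 < α) (ha : 0 ≤ a) (hμ : ∀ᵐ l ∂μ, 0 ≤ l)
    (hexp : ∀ s > 0, (fun u => exp (-(s * u))) ∈ karamataSubmodule μ α a)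
    {ψ : ℝ → ℝ} (hψ : Continuous ψ) {c : ℝ} (hc : 0 < c) (hψc : ∀ y ∈ Icc 0 c, ψ y = 0) :
    (fun u => ψ (exp (-u))) ∈ karamataSubmodule μ α a := by
  -- `ψ y / y`, made continuous at `0` using that `ψ` vanishes on `[0, c]`
  set χ := fun y => ψ y / max y c
  have hχ : Continuous χ := hψ.div (continuous_id.max continuous_const) fun y =>
    (hc.trans_le (le_max_right _ _)).ne'
  have hψχ : ∀ y ≥ 0, ψ y = y * χ y := by
    intro y hy
    rcases le_total y c with hyc | hcy
    · simp [χ, hψc y ⟨hy, hyc⟩]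
    · simp only [χ, max_eq_left hcy]
      field_simp [(hc.trans_le hcy).ne']
  have hΓ := Gamma_pos_of_pos hα
  refine mem_karamataSubmodule_of_sandwich hα ha hμ (hψ.comp (continuous_exp.comp
    continuous_neg)).measurable fun ε hε => ?_
  set δ := ε / (4 * Gamma α)
  obtain ⟨r, hr⟩ := exists_polynomial_near_of_continuousOn 0 1 χ hχ.continuousOn δ (by positivity)
  refine ⟨_, exp_neg_mul_eval_mem_of_exp_neg_mul_mem hexp (r - C δ), _,
    exp_neg_mul_eval_mem_of_exp_neg_mul_mem hexp (r + C δ), fun u hu => ?_, ?_⟩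
  · have hy : exp (-u) ∈ Icc (0 : ℝ) 1 := ⟨(exp_pos _).le, exp_le_one_iff.2 (by linarith)⟩
    have := abs_lt.1 (hr _ hy)
    simp only [eval_sub, eval_add, eval_C, hψχ _ hy.1]
    constructor <;> nlinarith [hy.1]
  · have hgap : ∀ u, (exp (-u) * (r + C δ).eval (exp (-u)) - exp (-u) * (r - C δ).eval (exp (-u)))
        * u ^ (α - 1) = 2 * δ * (exp (-u) * u ^ (α - 1)) := fun u => by
      simp only [eval_sub, eval_add, eval_C]
      ring
    simp only [hgap, integral_const_mul, ← Gamma_eq_integral hα, δ]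
    field_simp
    linarith

theorem expRamp_mem_karamataSubmodule (hα : 0 < α) (ha : 0 ≤ a) (hμ : ∀ᵐ l ∂μ, 0 ≤ l)
    (hexp : ∀ s > 0, (fun u => exp (-(s * u))) ∈ karamataSubmodule μ α a) {p q : ℝ} (hpq : p ≤ q) :
    expRamp p q ∈ karamataSubmodule μ α a :=
  comp_exp_neg_mem_karamataSubmodule hα ha hμ hexp (continuous_ramp _ _) (exp_pos (-q))
    fun _ hy => ramp_of_le (exp_le_exp.2 (neg_le_neg hpq)) hy.2

theorem indicator_Iic_one_mem_karamataSubmodule (hα : 0 < α) (ha : 0 ≤ a) (hμ : ∀ᵐ l ∂μ, 0 ≤ l)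
    (hexp : ∀ s > 0, (fun u => exp (-(s * u))) ∈ karamataSubmodule μ α a) :
    (Iic (1 : ℝ)).indicator 1 ∈ karamataSubmodule μ α a := by
  refine mem_karamataSubmodule_of_sandwich hα ha hμ (measurable_const.indicator measurableSet_Iic)
    fun ε hε => ?_
  obtain ⟨γ, β, hγ₀, hγ, hβ, hgap⟩ := exists_rpow_sub_rpow_lt hα (mul_pos hα hε)
  have hlow := expRamp_mem_karamataSubmodule hα ha hμ hexp hγ.le
  have hup := expRamp_mem_karamataSubmodule hα ha hμ hexp hβ.le
  refine ⟨_, hlow, _, hup,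
    fun u _ => ⟨expRamp_le_indicator_Iic hγ.le u, indicator_Iic_le_expRamp hβ u⟩, ?_⟩
  have hdiff : IntegrableOn (fun u => (expRamp 1 β u - expRamp γ 1 u) * u ^ (α - 1)) (Ioi 0) := by
    refine (hup.2.1.sub hlow.2.1).congr_fun (fun u _ => ?_) measurableSet_Ioi
    simp only [Pi.sub_apply, sub_mul]
  have hwint : IntegrableOn (fun u : ℝ => u ^ (α - 1)) (Ioc γ β) :=
    (intervalIntegral.intervalIntegrable_rpow' (by linarith)).1
  calc _ ≤ ∫ u in Ioi 0, (Ioc γ β).indicator (fun u => u ^ (α - 1)) u := by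
        refine setIntegral_mono_on hdiff (hwint.integrable_indicator measurableSet_Ioc).integrableOn
          measurableSet_Ioi fun u hu => ?_
        rw [← indicator_one_mul_apply]
        exact mul_le_mul_of_nonneg_right (expRamp_sub_expRamp_le_indicator hγ hβ u)
          (rpow_nonneg (le_of_lt hu) _)
    _ = ∫ u in γ..β, u ^ (α - 1) := by
        rw [setIntegral_indicator measurableSet_Ioc,
          inter_eq_right.2 (Ioc_subset_Ioi_self.trans (Ioi_subset_Ioi hγ₀.le)),
          intervalIntegral.integral_of_le (by linarith)]
    _ = (β ^ α - γ ^ α) / α := by rw [integral_rpow (Or.inl (by linarith)), sub_add_cancel]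
    _ < ε := by rwa [div_lt_iff₀ hα, mul_comm]

theorem integral_indicator_Iic_one_mul_rpow (hα : 0 < α) :
    ∫ u in Ioi 0, (Iic (1 : ℝ)).indicator 1 u * u ^ (α - 1) = 1 / α := by
  simp only [indicator_one_mul_apply (f := fun u : ℝ => u ^ (α - 1))]
  rw [setIntegral_indicator measurableSet_Iic, Ioi_inter_Iic,
    ← intervalIntegral.integral_of_le zero_le_one, integral_rpow (Or.inl (by linarith)),
    sub_add_cancel, one_rpow, zero_rpow hα.ne', sub_zero]

theorem tendsto_measure_Icc_div_rpow (hα : 0 < α) (ha : 0 ≤ a) (hμ : ∀ᵐ l ∂μ, 0 ≤ l)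
    (hexp : ∀ s > 0, (fun u => exp (-(s * u))) ∈ karamataSubmodule μ α a) :
    Tendsto (fun x => (μ (Icc 0 x)).toReal / x ^ α) atTop (𝓝 (a / Gamma (α + 1))) := by
  have hlim := (indicator_Iic_one_mem_karamataSubmodule hα ha hμ hexp).2.2
  rw [integral_indicator_Iic_one_mul_rpow hα, div_mul_div_comm, mul_one, mul_comm,
    ← Gamma_add_one hα.ne'] at hlim
  refine hlim.congr' <| (eventually_gt_atTop 0).mono fun x hx => ?_
  have hscaled :
      (fun l => (Iic (1 : ℝ)).indicator (1 : ℝ → ℝ) (l / x)) =ᵐ[μ] (Icc 0 x).indicator 1 :=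
    hμ.mono fun l hl => by simp [indicator_apply, div_le_one hx, hl]
  dsimp only
  rw [integral_congr_ae hscaled, integral_indicator_one measurableSet_Icc, rpow_neg hx.le,
    inv_mul_eq_div, Measure.real]

end Karamata

/-- Karamata's Tauberian theorem: if `μ` is a positive Borel measure on `[0,∞)` whose Laplace
transform `∫ e^{-tλ} dμ(λ)` is finite for all `t > 0` and satisfies
`t^α ∫ e^{-tλ} dμ(λ) → a` as `t → 0⁺`, then `x^{-α} μ([0,x]) → a / Γ(α+1)` as `x → ∞`. -/
theorem stmt10 (μ : Measure ℝ) (hsupp : μ (Set.Iio 0) = 0)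
    (α a : ℝ) (hα : 0 < α) (ha : 0 ≤ a)
    (hfin : ∀ t : ℝ, 0 < t → ∫⁻ x, ENNReal.ofReal (Real.exp (-(t * x))) ∂μ < ⊤)
    (h : Filter.Tendsto
        (fun t : ℝ => t ^ α * (∫⁻ x, ENNReal.ofReal (Real.exp (-(t * x))) ∂μ).toReal)
        (nhdsWithin 0 (Set.Ioi 0)) (𝓝 a)) :
    Filter.Tendsto (fun x : ℝ => (μ (Set.Icc 0 x)).toReal / x ^ α)
      Filter.atTop (𝓝 (a / Real.Gamma (α + 1))) := by
  have hμ : ∀ᵐ l ∂μ, 0 ≤ l := by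
    rw [ae_iff]
    simp only [not_le]
    exact hsupp
  have hmeas : ∀ t : ℝ, AEStronglyMeasurable (fun l => exp (-(t * l))) μ := fun t =>
    (continuous_exp.comp (continuous_const.mul continuous_id).neg).aestronglyMeasurable
  have hexp_nonneg : ∀ t : ℝ, 0 ≤ᵐ[μ] fun l => exp (-(t * l)) := fun t =>
    ae_of_all _ fun l => (exp_pos _).le
  have hint : ∀ t > 0, Integrable (fun l => exp (-(t * l))) μ := fun t ht =>
    ⟨hmeas t, (hasFiniteIntegral_iff_ofReal (hexp_nonneg t)).2 (hfin t ht)⟩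
  have hlim : Tendsto (fun t => t ^ α * ∫ l, exp (-(t * l)) ∂μ) (𝓝[>] 0) (𝓝 a) := by
    simpa only [integral_eq_lintegral_of_nonneg_ae (hexp_nonneg _) (hmeas _)] using h
  exact tendsto_measure_Icc_div_rpow hα ha hμ fun s hs =>
    exp_neg_mul_mem_karamataSubmodule hα hint hlim hs
end
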